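/- For λ > 2, a ∈ (0,1/2), the function g(λ) := F(λ) - a log(λ - 1), where F(λ) = log(λ/(2√(λ-1))), has a unique zero λ_c(a) in (2,∞); moreover g is negative on (2, λ_c(a)) and positive on (λ_c(a), ∞). -/

import Mathlib

noncomputable def freeEn (l : ℝ) : ℝ := Real.log (l / (2 * Real.sqrt (l - 1)))

lemma freeEn_eq (l : ℝ) (hl : 1 < l) :
    freeEn l = Real.log l - Real.log 2 - (1/2) * Real.log (l - 1) := by
  have h1 : (0:ℝ) < l - 1 := by linarith
  have hs : Real.sqrt (l-1) ≠ 0 := by positivity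
  unfold freeEn
  rw [Real.log_div (by linarith) (by positivity), Real.log_mul (by norm_num) hs,
    Real.log_sqrt h1.le]
  ring

lemma gderiv (b l : ℝ) (hl : 1 < l) :
    HasDerivAt (fun x => Real.log x - Real.log 2 - b * Real.log (x - 1))
      (l⁻¹ - b * ((1:ℝ)/(l-1))) l := by
  have h0 : l ≠ 0 := by linarith
  have h1 : l - 1 ≠ 0 := by intro h; nlinarith [h]
  have H1 : HasDerivAt (fun x : ℝ => Real.log x - Real.log 2) l⁻¹ l :=
    (Real.hasDerivAt_log h0).sub_const _
  have H2 : HasDerivAt (fun x : ℝ => Real.log (x - 1)) (1/(l-1)) l := by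
    have := (((hasDerivAt_id l).sub_const 1).log h1)
    simpa using this
  exact H1.sub (H2.const_mul b)

/-- For `a ∈ (0,1/2)`, the function `g(λ) = F(λ) - a log(λ-1)` has a unique zero
`λ_c(a)` in `(2,∞)`; moreover `g < 0` on `(2, λ_c(a))` and `g > 0` on `(λ_c(a), ∞)`. -/
theorem critical_point_exists_unique (a : ℝ) (ha : a ∈ Set.Ioo (0 : ℝ) (1 / 2)) :
    ∃ lc : ℝ, 2 < lc ∧ freeEn lc - a * Real.log (lc - 1) = 0 ∧
      (∀ mu : ℝ, 2 < mu → mu < lc → freeEn mu - a * Real.log (mu - 1) < 0) ∧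
      (∀ mu : ℝ, lc < mu → 0 < freeEn mu - a * Real.log (mu - 1)) ∧
      (∀ mu : ℝ, 2 < mu → freeEn mu - a * Real.log (mu - 1) = 0 → mu = lc) := by
  obtain ⟨ha0, ha2⟩ := ha
  set b : ℝ := 1/2 + a with hb
  set c : ℝ := 1/2 - a with hcdef
  have hc0 : 0 < c := by simp [hcdef]; linarith
  have hb0 : 0 < b := by simp [hb]; linarith
  have hbc : b + c = 1 := by simp [hb, hcdef]; ring
  set g : ℝ → ℝ := fun x => Real.log x - Real.log 2 - b * Real.log (x - 1) with hgdef
  have hgeq : ∀ l : ℝ, 1 < l → freeEn l - a * Real.log (l-1) = g l := by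
    intro l hl
    rw [freeEn_eq l hl]
    simp only [hgdef, hb]
    ring
  have hg2 : g 2 = 0 := by
    show Real.log 2 - Real.log 2 - b * Real.log (2 - 1) = 0
    norm_num
  have hlam : 2 < 1/c := by
    rw [lt_div_iff₀ hc0]; simp [hcdef]; linarith
  -- strictly antitone on [2, 1/c]
  have hanti : StrictAntiOn g (Set.Icc 2 (1/c)) := by
    apply strictAntiOn_of_deriv_neg (convex_Icc _ _)
    · intro x hx
      exact ((gderiv b x (by linarith [hx.1])).continuousAt).continuousWithinAt
    · intro x hx
      rw [interior_Icc] at hx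
      have hx1 : (1:ℝ) < x := by linarith [hx.1]
      rw [(gderiv b x hx1).deriv]
      have hxne : x ≠ 0 := by linarith
      have hxne1 : x - 1 ≠ 0 := by intro h; nlinarith [h]
      have key : x⁻¹ - b * ((1:ℝ)/(x-1)) = (c*x - 1)/(x*(x-1)) := by
        field_simp
        nlinarith [hbc]
      rw [key]
      apply div_neg_of_neg_of_pos
      · have := hx.2
        nlinarith [(lt_div_iff₀ hc0).mp hx.2]
      · nlinarith
  -- strictly monotone on [1/c, ∞)
  have hmono : StrictMonoOn g (Set.Ici (1/c)) := by
    apply strictMonoOn_of_deriv_pos (convex_Ici _)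
    · intro x hx
      have hx' : (1:ℝ)/c ≤ x := hx
      have hx1 : (1:ℝ) < x := by linarith
      exact ((gderiv b x hx1).continuousAt).continuousWithinAt
    · intro x hx
      rw [interior_Ici] at hx
      have hx'' : (1:ℝ)/c < x := hx
      have hx1 : (1:ℝ) < x := by linarith
      rw [(gderiv b x hx1).deriv]
      have key : x⁻¹ - b * ((1:ℝ)/(x-1)) = (c*x - 1)/(x*(x-1)) := by
        have hxne : x ≠ 0 := by linarith
        have hxne1 : x - 1 ≠ 0 := by intro h; nlinarith [h]
        field_simp
        nlinarith [hbc]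
      rw [key]
      apply div_pos
      · nlinarith [(div_lt_iff₀ hc0).mp hx]
      · nlinarith
  -- g negative on (2, 1/c]
  have hneg : ∀ mu : ℝ, 2 < mu → mu ≤ 1/c → g mu < 0 := by
    intro mu h1 h2
    have := hanti (Set.mem_Icc.mpr ⟨le_refl 2, hlam.le⟩) (Set.mem_Icc.mpr ⟨h1.le, h2⟩) h1
    rw [hg2] at this
    exact this
  have hglam : g (1/c) < 0 := hneg _ hlam (le_refl _)
  -- a point where g is positive
  set M : ℝ := max (1/c) (Real.exp ((Real.log 2 + 1)/c)) with hM
  have hM1 : 1/c ≤ M := le_max_left _ _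
  have hM2 : (2:ℝ) < M := lt_of_lt_of_le hlam hM1
  have hlogM : (Real.log 2 + 1)/c ≤ Real.log M := by
    calc (Real.log 2 + 1)/c = Real.log (Real.exp ((Real.log 2 + 1)/c)) := (Real.log_exp _).symm
    _ ≤ Real.log M := Real.log_le_log (Real.exp_pos _) (le_max_right _ _)
  have hgM : 0 < g M := by
    have h1 : Real.log (M - 1) ≤ Real.log M := Real.log_le_log (by linarith) (by linarith)
    have h2 : b * Real.log (M-1) ≤ b * Real.log M := by
      apply mul_le_mul_of_nonneg_left h1 hb0.le
    have h3 : Real.log M - b * Real.log M = c * Real.log M := by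
      have hb' : b = 1 - c := by linarith
      rw [hb']; ring
    have h4 : Real.log 2 + 1 ≤ c * Real.log M := by
      have := (div_le_iff₀ hc0).mp hlogM
      linarith [this]
    simp only [hgdef]
    nlinarith
  -- IVT on [1/c, M]
  have hcontIcc : ContinuousOn g (Set.Icc (1/c) M) := by
    intro x hx
    have : (1:ℝ) < x := by linarith [hx.1]
    exact ((gderiv b x this).continuousAt).continuousWithinAt
  have hIVT := intermediate_value_Ioo hM1 hcontIcc
  have h0mem : (0:ℝ) ∈ Set.Ioo (g (1/c)) (g M) := ⟨hglam, hgM⟩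
  obtain ⟨lc, hlcmem, hlc0⟩ := hIVT h0mem
  have hlc1 : 1/c < lc := hlcmem.1
  have hlc2 : 2 < lc := lt_trans hlam hlc1
  refine ⟨lc, hlc2, ?_, ?_, ?_, ?_⟩
  · rw [hgeq lc (by linarith)]; exact hlc0
  · intro mu h1 h2
    rw [hgeq mu (by linarith)]
    rcases le_or_gt mu (1/c) with h | h
    · exact hneg mu h1 h
    · have := hmono (Set.mem_Ici.mpr h.le) (Set.mem_Ici.mpr hlc1.le) h2
      rw [hlc0] at this
      exact this
  · intro mu h1
    rw [hgeq mu (by linarith)]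
    have := hmono (Set.mem_Ici.mpr hlc1.le) (Set.mem_Ici.mpr (by linarith : 1/c ≤ mu)) h1
    rw [hlc0] at this
    exact this
  · intro mu h1 h2
    rw [hgeq mu (by linarith)] at h2
    rcases lt_trichotomy mu lc with h | h | h
    · exfalso
      rcases le_or_gt mu (1/c) with h' | h'
      · linarith [hneg mu h1 h']
      · have := hmono (Set.mem_Ici.mpr h'.le) (Set.mem_Ici.mpr hlc1.le) h
        rw [hlc0, h2] at this
        exact lt_irrefl _ this
    · exact h
    · exfalso
      have := hmono (Set.mem_Ici.mpr hlc1.le) (Set.mem_Ici.mpr (by linarith : 1/c ≤ mu)) h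
      rw [hlc0, h2] at this
      exact lt_irrefl _ this
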